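/- Let f(β) = √β·∫₀^{√β} e^{−t²/2} dt + e^{−β/2} and g(β) = β·f(1/β) = √β·∫₀^{1/√β} e^{−t²/2} dt + β·e^{−1/(2β)} for β > 0. Then g is differentiable on (0,∞) with g'(β) = f(1/β) − (1/β)·f'(1/β) = (1/(2√β))·∫₀^{1/√β} e^{−t²/2} dt + e^{−1/(2β)}; g' is strictly decreasing on (0,∞); g'(β) → ∞ as β → 0⁺ and g'(β) → 1 as β → ∞; g is concave; and for every α > 1 there is a unique β > 0 such that g'(β) = α. -/

import Mathlib

open Filter

/-- `f(β) = √β·∫₀^{√β} e^{−t²/2} dt + e^{−β/2}`. -/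
noncomputable def fFun (β : ℝ) : ℝ :=
  Real.sqrt β * (∫ t in (0:ℝ)..Real.sqrt β, Real.exp (-t^2/2)) + Real.exp (-β/2)

/-- `f'(β) = (1/(2√β))·∫₀^{√β} e^{−t²/2} dt`. -/
noncomputable def fDeriv (β : ℝ) : ℝ :=
  (1/(2*Real.sqrt β)) * ∫ t in (0:ℝ)..Real.sqrt β, Real.exp (-t^2/2)

/-- `g(β) = β·f(1/β)`. -/
noncomputable def gFun (β : ℝ) : ℝ := β * fFun (1/β)

/-- `g'(β) = (1/(2√β))·∫₀^{1/√β} e^{−t²/2} dt + e^{−1/(2β)}`. -/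
noncomputable def gDeriv (β : ℝ) : ℝ :=
  (1/(2*Real.sqrt β)) * (∫ t in (0:ℝ)..(1/Real.sqrt β), Real.exp (-t^2/2))
    + Real.exp (-1/(2*β))

/-!
With `Φ(s) = ∫₀ˢ e^{-t²/2} dt` and the substitution `s = 1/√β`, the derivative becomes
`g'(β) = h(s) := (s/2)·Φ(s) + e^{-s²/2}`. Since the integrand decreases, `Φ(s) > s·e^{-s²/2}`
for `s > 0`, which is exactly `h'(s) > 0`; so `g'` is strictly decreasing, whence `g` is concave.
Moreover `h(0) = 1` and `h(s) ≥ (s/2)·Φ(1) → ∞`, which gives both limits and, by the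
intermediate value theorem, the solution of `g'(β) = α`. The derivative itself comes from
`f(x) = F(√x)` with `F(s) = s·Φ(s) + e^{-s²/2}`, whose derivative is just `Φ`.
Here `Φ`, `h`, `F` are `gaussPrim`, `hFun`, `fSq`.
-/

open Set Real

theorem mul_lt_intervalIntegral_of_strictAntiOn {f : ℝ → ℝ} {a b : ℝ} (hab : a < b)
    (hf : ContinuousOn f (Icc a b)) (hanti : StrictAntiOn f (Icc a b)) :
    (b - a) * f b < ∫ x in a..b, f x := by
  have hpos : 0 < ∫ x in a..b, (f x - f b) :=
    intervalIntegral.intervalIntegral_pos_of_pos_on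
      ((hf.sub continuousOn_const).intervalIntegrable_of_Icc hab.le)
      (fun x hx => sub_pos.2 <| hanti ⟨hx.1.le, hx.2.le⟩ (right_mem_Icc.2 hab.le) hx.2) hab
  rw [intervalIntegral.integral_sub (hf.intervalIntegrable_of_Icc hab.le) intervalIntegrable_const,
    intervalIntegral.integral_const, smul_eq_mul] at hpos
  linarith

theorem continuous_exp_neg_sq_div_two : Continuous fun t : ℝ => exp (-t ^ 2 / 2) := by
  fun_prop

theorem hasDerivAt_exp_neg_sq_div_two (x : ℝ) :
    HasDerivAt (fun t => exp (-t ^ 2 / 2)) (-x * exp (-x ^ 2 / 2)) x := by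
  have h : HasDerivAt (fun t : ℝ => -t ^ 2 / 2) (-x) x :=
    (((hasDerivAt_id x).fun_pow 2).fun_neg.div_const 2).congr_deriv (by simp; ring)
  exact h.exp.congr_deriv (mul_comm _ _)

theorem strictAntiOn_exp_neg_sq_div_two : StrictAntiOn (fun t : ℝ => exp (-t ^ 2 / 2)) (Ici 0) := by
  intro s hs t _ hst
  have : s ^ 2 < t ^ 2 := pow_lt_pow_left₀ hst hs two_ne_zero
  simp only [exp_lt_exp]
  linarith

noncomputable def gaussPrim (x : ℝ) : ℝ := ∫ t in (0 : ℝ)..x, exp (-t ^ 2 / 2)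

theorem hasDerivAt_gaussPrim (x : ℝ) : HasDerivAt gaussPrim (exp (-x ^ 2 / 2)) x :=
  (continuous_exp_neg_sq_div_two.integral_hasStrictDerivAt 0 x).hasDerivAt

theorem continuous_gaussPrim : Continuous gaussPrim :=
  continuous_iff_continuousAt.2 fun x => (hasDerivAt_gaussPrim x).continuousAt

theorem monotone_gaussPrim : Monotone gaussPrim :=
  monotone_of_hasDerivAt_nonneg hasDerivAt_gaussPrim fun _ => (exp_pos _).le

theorem mul_exp_lt_gaussPrim {x : ℝ} (hx : 0 < x) : x * exp (-x ^ 2 / 2) < gaussPrim x := by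
  simpa [gaussPrim] using mul_lt_intervalIntegral_of_strictAntiOn hx
    continuous_exp_neg_sq_div_two.continuousOn
    (strictAntiOn_exp_neg_sq_div_two.mono Icc_subset_Ici_self)

noncomputable def fSq (s : ℝ) : ℝ := s * gaussPrim s + exp (-s ^ 2 / 2)

theorem hasDerivAt_fSq (s : ℝ) : HasDerivAt fSq (gaussPrim s) s :=
  (((hasDerivAt_id s).mul (hasDerivAt_gaussPrim s)).add
    (hasDerivAt_exp_neg_sq_div_two s)).congr_deriv (by simp only [id]; ring)

theorem fFun_eq_fSq_sqrt {x : ℝ} (hx : 0 ≤ x) : fFun x = fSq √x := by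
  rw [fFun, fSq, gaussPrim, sq_sqrt hx]

theorem hasDerivAt_fFun {x : ℝ} (hx : 0 < x) : HasDerivAt fFun (fDeriv x) x := by
  have h := (hasDerivAt_fSq √x).comp x (hasDerivAt_sqrt hx.ne')
  have hfFun : fSq ∘ sqrt =ᶠ[nhds x] fFun :=
    (eventually_ge_nhds hx).mono fun y hy => (fFun_eq_fSq_sqrt hy).symm
  refine (h.congr_of_eventuallyEq hfFun.symm).congr_deriv ?_
  rw [fDeriv, gaussPrim, one_div, mul_comm]

noncomputable def hFun (s : ℝ) : ℝ := s / 2 * gaussPrim s + exp (-s ^ 2 / 2)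

theorem hFun_zero : hFun 0 = 1 := by
  simp [hFun]

theorem continuous_hFun : Continuous hFun :=
  ((continuous_id.div_const 2).mul continuous_gaussPrim).add continuous_exp_neg_sq_div_two

theorem hasDerivAt_hFun (s : ℝ) :
    HasDerivAt hFun ((gaussPrim s - s * exp (-s ^ 2 / 2)) / 2) s :=
  ((((hasDerivAt_id s).div_const 2).mul (hasDerivAt_gaussPrim s)).add
    (hasDerivAt_exp_neg_sq_div_two s)).congr_deriv (by simp only [id]; ring)

theorem strictMonoOn_hFun : StrictMonoOn hFun (Ici 0) := by
  refine strictMonoOn_of_hasDerivWithinAt_pos (convex_Ici 0) continuous_hFun.continuousOn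
    (fun s _ => (hasDerivAt_hFun s).hasDerivWithinAt) fun s hs => ?_
  rw [interior_Ici] at hs
  linarith [mul_exp_lt_gaussPrim hs]

theorem tendsto_hFun_atTop : Tendsto hFun atTop atTop := by
  have hprim : 0 < gaussPrim 1 := (mul_pos one_pos (exp_pos _)).trans (mul_exp_lt_gaussPrim one_pos)
  refine tendsto_atTop_mono' atTop ?_ ((tendsto_id.atTop_mul_const (half_pos hprim)))
  filter_upwards [eventually_ge_atTop 1] with s hs
  have := monotone_gaussPrim hs
  have := exp_pos (-s ^ 2 / 2)
  simp only [id, hFun]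
  nlinarith

theorem fFun_sub_mul_fDeriv {x : ℝ} (hx : 0 ≤ x) : fFun x - x * fDeriv x = hFun √x := by
  rw [fFun_eq_fSq_sqrt hx, fSq, hFun, fDeriv, ← gaussPrim]
  rcases hx.eq_or_lt with rfl | hx
  · simp
  · have : x / (2 * √x) = √x / 2 := by
      rw [mul_comm, ← div_div, div_sqrt]
    rw [← mul_assoc, mul_one_div, this]
    ring

theorem gDeriv_eq_hFun {β : ℝ} (hβ : 0 ≤ β) : gDeriv β = hFun √β⁻¹ := by
  rw [gDeriv, hFun, gaussPrim, sqrt_inv, inv_pow, sq_sqrt hβ]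
  ring_nf

theorem gDeriv_eq_fFun_sub {β : ℝ} (hβ : 0 ≤ β) :
    gDeriv β = fFun (1 / β) - 1 / β * fDeriv (1 / β) := by
  rw [one_div, fFun_sub_mul_fDeriv (inv_nonneg.2 hβ), gDeriv_eq_hFun hβ]

theorem gFun_eq (β : ℝ) :
    gFun β = √β * (∫ t in (0 : ℝ)..(1 / √β), exp (-t ^ 2 / 2)) + β * exp (-1 / (2 * β)) := by
  rw [gFun, fFun, one_div, sqrt_inv, mul_add, ← mul_assoc, ← div_eq_mul_inv, div_sqrt, one_div]
  ring_nf

theorem hasDerivAt_gFun {β : ℝ} (hβ : 0 < β) : HasDerivAt gFun (gDeriv β) β := by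
  have hinv : HasDerivAt (fun b : ℝ => 1 / b) (-(β ^ 2)⁻¹) β := by
    simpa only [one_div] using hasDerivAt_inv hβ.ne'
  have h := (hasDerivAt_id β).mul ((hasDerivAt_fFun (one_div_pos.2 hβ)).comp β hinv)
  refine h.congr_deriv ?_
  rw [gDeriv_eq_fFun_sub hβ.le]
  simp only [Function.comp, id, one_div]
  field_simp
  ring

theorem strictAntiOn_gDeriv : StrictAntiOn gDeriv (Ioi 0) := by
  intro a ha b hb hab
  rw [gDeriv_eq_hFun (le_of_lt ha), gDeriv_eq_hFun (le_of_lt hb)]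
  exact strictMonoOn_hFun (sqrt_nonneg _) (sqrt_nonneg _)
    (sqrt_lt_sqrt (inv_nonneg.2 (le_of_lt hb)) (inv_strictAntiOn ha hb hab))

theorem tendsto_gDeriv_nhdsGT_zero : Tendsto gDeriv (nhdsWithin 0 (Ioi 0)) atTop := by
  refine (tendsto_hFun_atTop.comp (tendsto_sqrt_atTop.comp tendsto_inv_nhdsGT_zero)).congr' ?_
  filter_upwards [self_mem_nhdsWithin] with β hβ
  exact (gDeriv_eq_hFun (le_of_lt hβ)).symm

theorem tendsto_gDeriv_atTop : Tendsto gDeriv atTop (nhds 1) := by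
  have hsqrt : Tendsto (fun β : ℝ => √β⁻¹) atTop (nhds 0) := by
    have h := (continuous_sqrt.tendsto 0).comp tendsto_inv_atTop_zero
    rwa [sqrt_zero] at h
  refine (hFun_zero ▸ (continuous_hFun.tendsto 0).comp hsqrt).congr' ?_
  filter_upwards [eventually_ge_atTop 0] with β hβ
  exact (gDeriv_eq_hFun hβ).symm

theorem concaveOn_gFun : ConcaveOn ℝ (Ioi 0) gFun := by
  refine AntitoneOn.concaveOn_of_deriv (convex_Ioi 0)
    (fun β hβ => (hasDerivAt_gFun hβ).continuousAt.continuousWithinAt) ?_ ?_ <;>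
    rw [interior_Ioi]
  · exact fun β hβ => (hasDerivAt_gFun hβ).differentiableAt.differentiableWithinAt
  · intro a ha b hb hab
    rw [(hasDerivAt_gFun ha).deriv, (hasDerivAt_gFun hb).deriv]
    exact strictAntiOn_gDeriv.antitoneOn ha hb hab

theorem existsUnique_gDeriv_eq {α : ℝ} (hα : 1 < α) : ∃! β : ℝ, 0 < β ∧ gDeriv β = α := by
  obtain ⟨s, hs, hsα⟩ :=
    intermediate_value_Ioi continuous_hFun.continuousOn tendsto_hFun_atTop (hFun_zero ▸ hα)
  have hs : 0 < s := hs
  have hgs : gDeriv (s ^ 2)⁻¹ = α := by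
    rw [gDeriv_eq_hFun (by positivity), inv_inv, sqrt_sq hs.le, hsα]
  refine ⟨(s ^ 2)⁻¹, ⟨by positivity, hgs⟩, fun β hβ => ?_⟩
  exact strictAntiOn_gDeriv.injOn hβ.1 (by positivity : (0 : ℝ) < (s ^ 2)⁻¹) (hβ.2.trans hgs.symm)

theorem gFun_properties :
    (∀ β : ℝ, 0 < β → gFun β =
      Real.sqrt β * (∫ t in (0:ℝ)..(1/Real.sqrt β), Real.exp (-t^2/2))
        + β * Real.exp (-1/(2*β))) ∧
    (∀ β : ℝ, 0 < β → HasDerivAt gFun (gDeriv β) β) ∧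
    (∀ β : ℝ, 0 < β → gDeriv β = fFun (1/β) - (1/β) * fDeriv (1/β)) ∧
    StrictAntiOn gDeriv (Set.Ioi 0) ∧
    Tendsto gDeriv (nhdsWithin 0 (Set.Ioi 0)) atTop ∧
    Tendsto gDeriv atTop (nhds 1) ∧
    ConcaveOn ℝ (Set.Ioi 0) gFun ∧
    (∀ α : ℝ, 1 < α → ∃! β : ℝ, 0 < β ∧ gDeriv β = α) := by
  exact ⟨fun β _ => gFun_eq β, fun _ => hasDerivAt_gFun,
    fun _ hβ => gDeriv_eq_fFun_sub hβ.le, strictAntiOn_gDeriv, tendsto_gDeriv_nhdsGT_zero,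
    tendsto_gDeriv_atTop, concaveOn_gFun, fun _ => existsUnique_gDeriv_eq⟩
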